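/- With the star-product as defined, for any N×N matrix θ one has ([[a,b,c],[d,e,f],[g,h,j]]·[[1,0,θ],[0,1,0],[0,0,1]]) ⋆ p = (a⋆p) · Γ, where Γ = [[1,0,0,0,0],[0,1,0,θ,0],[0,0,1,0,0],[0,0,0,1,0],[0,0,0,0,1]] relative to the splitting N+N+m+N+N; in particular Γ lies in the subgroup P of matrices [[α,*,*],[0,1_m,*],[0,0,β]]. -/

import Mathlib

open Matrix

section Prelude

variable {R : Type*}

/-- A 3×3 block matrix. -/
def blk3 {i1 i2 i3 j1 j2 j3 : Type*}
    (A : Matrix i1 j1 R) (B : Matrix i1 j2 R) (C : Matrix i1 j3 R)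
    (D : Matrix i2 j1 R) (E : Matrix i2 j2 R) (F : Matrix i2 j3 R)
    (G : Matrix i3 j1 R) (H : Matrix i3 j2 R) (J : Matrix i3 j3 R) :
    Matrix (i1 ⊕ (i2 ⊕ i3)) (j1 ⊕ (j2 ⊕ j3)) R :=
  Matrix.fromBlocks A (Matrix.fromCols B C) (Matrix.fromRows D G)
    (Matrix.fromBlocks E F H J)

/-- The data of a square matrix split into 3×3 blocks with diagonal index types
`i1`, `i2`, `i3`. -/
structure Blk (R i1 i2 i3 : Type*) where
  a : Matrix i1 i1 R
  b : Matrix i1 i2 R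
  c : Matrix i1 i3 R
  d : Matrix i2 i1 R
  e : Matrix i2 i2 R
  f : Matrix i2 i3 R
  g : Matrix i3 i1 R
  h : Matrix i3 i2 R
  j : Matrix i3 i3 R

def Blk.toMatrix {i1 i2 i3 : Type*} (M : Blk R i1 i2 i3) :
    Matrix (i1 ⊕ (i2 ⊕ i3)) (i1 ⊕ (i2 ⊕ i3)) R :=
  blk3 M.a M.b M.c M.d M.e M.f M.g M.h M.j

/-- The ⋆-product of the paper, on the level of block data:
`A ⋆ P` is the `(j1+i1)+m+(i3+j3)` block matrix
`[[p,0,q,0,r],[bu,a,bv,c,bw],[eu,d,ev,f,ew],[hu,g,hv,j,hw],[x,0,y,0,z]]`. -/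
def starB [CommRing R] {i1 m i3 j1 j3 : Type*} [Fintype m]
    (A : Blk R i1 m i3) (P : Blk R j1 m j3) : Blk R (j1 ⊕ i1) m (i3 ⊕ j3) where
  a := Matrix.fromBlocks P.a 0 (A.b * P.d) A.a
  b := Matrix.fromRows P.b (A.b * P.e)
  c := Matrix.fromBlocks 0 P.c A.c (A.b * P.f)
  d := Matrix.fromCols (A.e * P.d) A.d
  e := A.e * P.e
  f := Matrix.fromCols A.f (A.e * P.f)
  g := Matrix.fromBlocks (A.h * P.d) A.g P.g 0
  h := Matrix.fromRows (A.h * P.e) P.h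
  j := Matrix.fromBlocks A.j (A.h * P.f) 0 P.j

/-- The subgroup `P` of block matrices `[[α,φ,θ],[0,1,ψ],[0,0,β]]` with `α`, `β`
invertible. -/
def Pset (R : Type*) [CommRing R] (i1 i2 i3 : Type*)
    [Fintype i1] [Fintype i3] [DecidableEq i1] [DecidableEq i2] [DecidableEq i3] :
    Set (Matrix (i1 ⊕ (i2 ⊕ i3)) (i1 ⊕ (i2 ⊕ i3)) R) :=
  {gm | ∃ (α : Matrix i1 i1 R) (φ : Matrix i1 i2 R) (θ : Matrix i1 i3 R)
      (ψ : Matrix i2 i3 R) (β : Matrix i3 i3 R),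
    IsUnit α ∧ IsUnit β ∧ gm = blk3 α φ θ 0 1 ψ 0 0 β}

end Prelude

/-! Right multiplication by the block transvection `[[1,0,θ],[0,1,0],[0,0,1]]` adds the first
block column times `θ` to the third. In `A ⋆ P` the block columns `(a,d,g)` and `(c,f,j)` of `A`
reappear as the second and fourth of the five block columns, so the same column operation on
`A ⋆ P` is right multiplication by the transvection with `θ` in that corner, i.e. by `Γ`. -/

namespace Matrix

variable {R : Type*} [Add R]

theorem fromCols_add {m n₁ n₂ : Type*} (A₁ B₁ : Matrix m n₁ R) (A₂ B₂ : Matrix m n₂ R) :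
    fromCols A₁ A₂ + fromCols B₁ B₂ = fromCols (A₁ + B₁) (A₂ + B₂) := by
  ext _ (_ | _) <;> rfl

theorem fromRows_add {m₁ m₂ n : Type*} (A₁ B₁ : Matrix m₁ n R) (A₂ B₂ : Matrix m₂ n R) :
    fromRows A₁ A₂ + fromRows B₁ B₂ = fromRows (A₁ + B₁) (A₂ + B₂) := by
  ext (_ | _) _ <;> rfl

end Matrix

theorem blk3_mul {R : Type*} [Semiring R]
    {i1 i2 i3 j1 j2 j3 l1 l2 l3 : Type*} [Fintype j1] [Fintype j2] [Fintype j3]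
    (A : Matrix i1 j1 R) (B : Matrix i1 j2 R) (C : Matrix i1 j3 R)
    (D : Matrix i2 j1 R) (E : Matrix i2 j2 R) (F : Matrix i2 j3 R)
    (G : Matrix i3 j1 R) (H : Matrix i3 j2 R) (J : Matrix i3 j3 R)
    (A' : Matrix j1 l1 R) (B' : Matrix j1 l2 R) (C' : Matrix j1 l3 R)
    (D' : Matrix j2 l1 R) (E' : Matrix j2 l2 R) (F' : Matrix j2 l3 R)
    (G' : Matrix j3 l1 R) (H' : Matrix j3 l2 R) (J' : Matrix j3 l3 R) :
    blk3 A B C D E F G H J * blk3 A' B' C' D' E' F' G' H' J' =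
      blk3 (A * A' + (B * D' + C * G')) (A * B' + (B * E' + C * H')) (A * C' + (B * F' + C * J'))
        (D * A' + (E * D' + F * G')) (D * B' + (E * E' + F * H')) (D * C' + (E * F' + F * J'))
        (G * A' + (H * D' + J * G')) (G * B' + (H * E' + J * H')) (G * C' + (H * F' + J * J')) := by
  simp only [blk3, fromBlocks_multiply, fromCols_mul_fromBlocks, fromBlocks_mul_fromRows,
    fromCols_mul_fromRows, mul_fromCols, fromRows_mul, fromCols_fromRows_eq_fromBlocks,
    fromBlocks_add, fromCols_add, fromRows_add]

section Transvection

variable {R : Type*} {i1 i2 i3 : Type*}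

def blockTransvection [Zero R] [One R] [DecidableEq i1] [DecidableEq i2] [DecidableEq i3]
    (θ : Matrix i1 i3 R) : Matrix (i1 ⊕ (i2 ⊕ i3)) (i1 ⊕ (i2 ⊕ i3)) R :=
  blk3 1 0 θ 0 1 0 0 0 1

def Blk.mulTransvection [NonUnitalNonAssocSemiring R] [Fintype i1] (A : Blk R i1 i2 i3)
    (θ : Matrix i1 i3 R) : Blk R i1 i2 i3 :=
  ⟨A.a, A.b, A.a * θ + A.c, A.d, A.e, A.d * θ + A.f, A.g, A.h, A.g * θ + A.j⟩

theorem Blk.toMatrix_mulTransvection [Semiring R] [Fintype i1] [Fintype i2] [Fintype i3]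
    [DecidableEq i1] [DecidableEq i2] [DecidableEq i3] (A : Blk R i1 i2 i3) (θ : Matrix i1 i3 R) :
    (A.mulTransvection θ).toMatrix = A.toMatrix * blockTransvection θ := by
  simp [Blk.toMatrix, Blk.mulTransvection, blockTransvection, blk3_mul]

theorem blockTransvection_mem_Pset [CommRing R] [Fintype i1] [Fintype i3]
    [DecidableEq i1] [DecidableEq i2] [DecidableEq i3] (θ : Matrix i1 i3 R) :
    blockTransvection (i2 := i2) θ ∈ Pset R i1 i2 i3 :=
  ⟨1, 0, θ, 0, 1, isUnit_one, isUnit_one, rfl⟩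

theorem starB_mulTransvection [CommRing R] {j1 j3 : Type*} [Fintype j1] [Fintype i1] [Fintype i2]
    (A : Blk R i1 i2 i3) (P : Blk R j1 i2 j3) (θ : Matrix i1 i3 R) :
    starB (A.mulTransvection θ) P = (starB A P).mulTransvection (fromBlocks 0 0 θ 0) := by
  simp [starB, Blk.mulTransvection, fromBlocks_multiply, fromCols_mul_fromBlocks,
    fromBlocks_add, fromCols_add]

end Transvection

/-- `(a · [[1,0,θ],[0,1,0],[0,0,1]]) ⋆ p = (a ⋆ p) · Γ`, where
`Γ = [[1,0,0,0,0],[0,1,0,θ,0],[0,0,1,0,0],[0,0,0,1,0],[0,0,0,0,1]]` (relative to the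
splitting `(N+N)+m+(N+N)`); in particular `Γ` lies in the subgroup `P`. -/
theorem stmt7 {k : Type*} [Field k] {m N : ℕ}
    (A P : Blk k (Fin N) (Fin m) (Fin N)) (θ : Matrix (Fin N) (Fin N) k) :
    (starB ⟨A.a, A.b, A.a * θ + A.c, A.d, A.e, A.d * θ + A.f,
        A.g, A.h, A.g * θ + A.j⟩ P).toMatrix
      = (starB A P).toMatrix *
        blk3 1 0 (Matrix.fromBlocks 0 0 θ 0) 0 (1 : Matrix (Fin m) (Fin m) k) 0 0 0 1 ∧
    blk3 1 0 (Matrix.fromBlocks 0 0 θ 0) 0 (1 : Matrix (Fin m) (Fin m) k) 0 0 0 1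
      ∈ Pset k (Fin N ⊕ Fin N) (Fin m) (Fin N ⊕ Fin N) :=
  ⟨(congrArg Blk.toMatrix (starB_mulTransvection A P θ)).trans
      (Blk.toMatrix_mulTransvection _ _),
    blockTransvection_mem_Pset (fromBlocks 0 0 θ 0)⟩
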